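/- arXiv:1804.09069 — 2 statements merged into one kernel-verified Lean document; each statement's English description precedes it below -/
import Mathlib

section
/- For all points (x,u_k,...,u_0) and (y,v_k,...,v_0) in J^k(R), the s-th coordinate of (x,u_k,...,u_0)⊙(y,v_k,...,v_0)^{-1} equals Σ_{j=s}^k ((-y)^{j-s}/(j-s)!)·(u_j - v_j) for each s=0,...,k. -/
open Finset

/-- `J^k(ℝ)` identified with `ℝ^{k+2}`: first coordinate `x`, and coordinates
`u_s` for `s = 0,…,k` given by a function `Fin (k+1) → ℝ`. -/
abbrev Jet (k : ℕ) : Type := ℝ × (Fin (k+1) → ℝ)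

/-- The jet group operation `⊙`. -/
noncomputable def jetMul (k : ℕ) (p q : Jet k) : Jet k :=
  (p.1 + q.1, fun s => p.2 s + q.2 s +
    ∑ j : Fin (k+1), if (s : ℕ) < (j : ℕ) then
      p.2 j * q.1 ^ ((j : ℕ) - (s : ℕ)) / (Nat.factorial ((j : ℕ) - (s : ℕ)) : ℝ)
    else 0)
/-- coordinates of `p ⊙ q⁻¹` in `J^k(ℝ)`. -/
theorem stmt2 (k : ℕ) (p q qinv : Jet k)
    (h₁ : jetMul k q qinv = ((0 : ℝ), fun _ => (0 : ℝ)))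
    (h₂ : jetMul k qinv q = ((0 : ℝ), fun _ => (0 : ℝ))) :
    ∀ s : Fin (k+1), (jetMul k p qinv).2 s =
      ∑ j : Fin (k+1), if (s : ℕ) ≤ (j : ℕ) then
        (-q.1) ^ ((j : ℕ) - (s : ℕ)) / (Nat.factorial ((j : ℕ) - (s : ℕ)) : ℝ) * (p.2 j - q.2 j)
      else 0 := by
  intro s
  have hy : qinv.1 = -q.1 := by
    have h := congrArg Prod.fst h₁
    simp [jetMul] at h
    linarith
  have hv : qinv.2 s = -(q.2 s) - ∑ j : Fin (k+1), (if (s:ℕ) < (j:ℕ) then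
      q.2 j * qinv.1 ^ ((j:ℕ)-(s:ℕ)) / (Nat.factorial ((j:ℕ)-(s:ℕ)) : ℝ) else 0) := by
    have h := congrArg (fun r : Jet k => r.2 s) h₁
    simp only [jetMul] at h
    linarith
  simp only [jetMul]
  rw [hv, ← hy]
  have split : ∀ j : Fin (k+1),
      (if (s:ℕ) ≤ (j:ℕ) then qinv.1 ^ ((j:ℕ)-(s:ℕ)) / (Nat.factorial ((j:ℕ)-(s:ℕ)) : ℝ) * (p.2 j - q.2 j) else 0)
      = (if (s:ℕ) < (j:ℕ) then p.2 j * qinv.1 ^ ((j:ℕ)-(s:ℕ)) / (Nat.factorial ((j:ℕ)-(s:ℕ)) : ℝ) else 0)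
        - (if (s:ℕ) < (j:ℕ) then q.2 j * qinv.1 ^ ((j:ℕ)-(s:ℕ)) / (Nat.factorial ((j:ℕ)-(s:ℕ)) : ℝ) else 0)
        + (if j = s then p.2 j - q.2 j else 0) := by
    intro j
    rcases lt_trichotomy (s:ℕ) (j:ℕ) with h | h | h
    · have hne : ¬ j = s := by intro e; simp [e] at h
      simp [h, le_of_lt h, hne]
      ring
    · have hj : j = s := Fin.ext h.symm
      simp [hj]
    · have h1 : ¬ (s:ℕ) ≤ (j:ℕ) := not_le.mpr h
      have h2 : ¬ (s:ℕ) < (j:ℕ) := by omega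
      have hne : ¬ j = s := by intro e; simp [e] at h
      simp [h1, h2, hne]
  rw [Finset.sum_congr rfl (fun j _ => split j), Finset.sum_add_distrib,
    Finset.sum_sub_distrib, Finset.sum_ite_eq' Finset.univ s (fun j => p.2 j - q.2 j)]
  simp
  ring
end

section
/- Fix t ∈ R and f ∈ C^∞(R). The map V_{f,t}(p) = p ⊙ j^k_{p_x - t}(f)^{-1} satisfies V_{f,t} ∘ V_{f,t} = V_{f,t} on J^k(R) if and only if j^k_0(f) = 0 (i.e., f(0) = f'(0) = ... = f^{(k)}(0) = 0). -/
open Finset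

/-- Explicit inverse for the jet group. -/
noncomputable def jetInv (k : ℕ) (p : Jet k) : Jet k :=
  (-p.1, fun t => -∑ j : Fin (k+1), if (t : ℕ) ≤ (j : ℕ) then
    (-p.1) ^ ((j : ℕ) - (t : ℕ)) / (Nat.factorial ((j : ℕ) - (t : ℕ)) : ℝ) * p.2 j
  else 0)

/-- The gauge norm `‖(x,u_k,…,u_0)‖ = |x| + Σ_j |u_j|^{1/(k+1-j)}`. -/
noncomputable def jetNorm (k : ℕ) (p : Jet k) : ℝ :=
  |p.1| + ∑ j : Fin (k+1), |p.2 j| ^ (1 / ((k : ℝ) + 1 - ((j : ℕ) : ℝ)))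

/-- The gauge distance `d(p,q) = ‖p⁻¹ ⊙ q‖`. -/
noncomputable def jetGauge (k : ℕ) (p q : Jet k) : ℝ :=
  jetNorm k (jetMul k (jetInv k p) q)

/-- The jet of a function: `j^k_x(f) = (x, f^{(k)}(x), …, f(x))`, where the
coordinate `u_s` equals `f^{(s)}(x)`. -/
noncomputable def jetOf (k : ℕ) (f : ℝ → ℝ) (x : ℝ) : Jet k :=
  (x, fun s => iteratedDeriv (s : ℕ) f x)

/-- The vertical mapping `V_{f,t}(p) = p ⊙ j^k_{p_x-t}(f)⁻¹`. -/
noncomputable def Vmap (k : ℕ) (f : ℝ → ℝ) (t : ℝ) (p : Jet k) : Jet k :=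
  jetMul k p (jetInv k (jetOf k f (p.1 - t)))

/-- The horizontal mapping `J_{f,t}(p) = j^k_{p_x-t}(f)`. -/
noncomputable def Jmap (k : ℕ) (f : ℝ → ℝ) (t : ℝ) (p : Jet k) : Jet k :=
  jetOf k f (p.1 - t)

lemma vmap_fst (k : ℕ) (f : ℝ → ℝ) (t : ℝ) (p : Jet k) : (Vmap k f t p).1 = t := by
  simp only [Vmap, jetMul, jetInv, jetOf]
  ring

lemma jetInv_jet0 (k : ℕ) (f : ℝ → ℝ) :
    jetInv k (jetOf k f 0) = (((0 : ℝ), fun s => -(iteratedDeriv (s : ℕ) f 0)) : Jet k) := by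
  unfold jetInv jetOf
  refine Prod.ext (by norm_num) (funext fun s => ?_)
  simp only [neg_inj, neg_zero]
  rw [Finset.sum_eq_single s]
  · simp
  · intro j _ hne
    rcases le_or_gt (s : ℕ) (j : ℕ) with h1 | h1
    · have hlt : (s : ℕ) < (j : ℕ) := lt_of_le_of_ne h1 (fun h => hne (Fin.ext h.symm))
      have : (j : ℕ) - (s : ℕ) ≠ 0 := Nat.sub_ne_zero_of_lt hlt
      simp [h1, zero_pow this]
    · simp [not_le.mpr h1]
  · simp

lemma jetMul_vert (k : ℕ) (q : Jet k) (w : Fin (k+1) → ℝ) :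
    jetMul k q ((0 : ℝ), w) = (q.1, fun s => q.2 s + w s) := by
  unfold jetMul
  refine Prod.ext (by ring) (funext fun s => ?_)
  have : ∀ j ∈ (Finset.univ : Finset (Fin (k+1))), (if (s : ℕ) < (j : ℕ) then
      q.2 j * (0:ℝ) ^ ((j : ℕ) - (s : ℕ)) / (Nat.factorial ((j : ℕ) - (s : ℕ)) : ℝ)
    else 0) = 0 := by
    intro j _
    rcases lt_or_ge (s : ℕ) (j : ℕ) with h | h
    · have : (j : ℕ) - (s : ℕ) ≠ 0 := Nat.sub_ne_zero_of_lt h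
      simp [h, zero_pow this]
    · simp [not_lt.mpr h]
  dsimp only
  rw [Finset.sum_congr rfl this]
  simp

lemma vmap_vmap (k : ℕ) (f : ℝ → ℝ) (t : ℝ) (p : Jet k) :
    Vmap k f t (Vmap k f t p) =
      jetMul k (Vmap k f t p) (((0 : ℝ), fun s => -(iteratedDeriv (s : ℕ) f 0)) : Jet k) := by
  conv_lhs => rw [Vmap]
  rw [vmap_fst, sub_self, jetInv_jet0]

/-- `V_{f,t}` is idempotent iff `j^k_0(f) = 0`, i.e.
`f(0) = f'(0) = ⋯ = f^{(k)}(0) = 0`. -/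
theorem stmt9 (k : ℕ) (f : ℝ → ℝ) (hf : ContDiff ℝ (⊤ : ℕ∞) f) (t : ℝ) :
    (∀ p : Jet k, Vmap k f t (Vmap k f t p) = Vmap k f t p) ↔
      jetOf k f 0 = ((0 : ℝ), fun _ => (0 : ℝ)) := by
  rw [show ((0 : ℝ), fun _ => (0 : ℝ)) = (((0:ℝ), fun _ => (0:ℝ)) : Jet k) from rfl]
  constructor
  · intro h
    refine Prod.ext rfl (funext fun s => ?_)
    have hp := h ((t, fun _ => 0) : Jet k)
    rw [vmap_vmap, jetMul_vert] at hp
    have := congrFun (congrArg Prod.snd hp) s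
    simp only at this
    have : -(iteratedDeriv (s : ℕ) f 0) = 0 := by linarith [this]
    simpa [jetOf] using neg_eq_zero.mp this
  · intro h p
    have hz : ∀ s : Fin (k+1), iteratedDeriv (s : ℕ) f 0 = 0 := fun s =>
      congrFun (congrArg Prod.snd h) s
    rw [vmap_vmap, jetMul_vert]
    refine Prod.ext rfl (funext fun s => ?_)
    simp [hz s]
end
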